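/- Let (X_t) be a family of ℝ^d-valued random variables indexed by t ∈ [0,1] on a probability space, and suppose there are constants C > 0 and λ > 0 such that E|X_t - X_s|^{-λ} ≤ C |t-s|^{-1} for all 0 ≤ s < t ≤ 1. Let F ⊆ [0,1] be a Borel set carrying a probability measure μ with ∬ |t-s|^{-α} μ(dt)μ(ds) < ∞ for some α ∈ (0,1]. Then almost surely ∬ |X_t - X_s|^{-αλ} μ(dt)μ(ds) < ∞, and consequently ℋ^{αλ}(X(F)) > 0 almost surely. -/

import Mathlib

/-!
Jensen's inequality for the concave map `x ↦ x ^ α` turns the moment bound into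
`E|X_t - X_s|^{-αλ} ≤ C^α |t - s|^{-α}`, so by Tonelli the expected `αλ`-energy of the image of
`μ` under `t ↦ X_t` is at most `C^α` times the `α`-energy of `μ`; hence it is almost surely
finite. A measure `ν` of finite `s`-energy has a finite potential `∫ |x - y|^{-s} dν(y) < M` on a
set `A` of positive mass, which forces `ν (B(x, r)) ≤ M r^s` for `x ∈ A`; covering a set by pieces
meeting `A` then bounds its `ν|_A`-mass by `M` times its Hausdorff content. Applied to the image
of `μ|_F`, which gives full mass to `X(F)`, this yields `ℋ^{αλ}(X(F)) > 0`.
-/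

open MeasureTheory Metric Set
open scoped ENNReal

theorem lintegral_rpow_le_rpow_lintegral {Ω : Type*} [MeasurableSpace Ω] {ℙ : Measure Ω}
    [IsProbabilityMeasure ℙ] {f : Ω → ℝ≥0∞} (hf : AEMeasurable f ℙ) {α : ℝ} (hα : 0 < α)
    (hα1 : α ≤ 1) : ∫⁻ ω, f ω ^ α ∂ℙ ≤ (∫⁻ ω, f ω ∂ℙ) ^ α := by
  have h := eLpNorm'_le_eLpNorm'_of_exponent_le hα hα1 ℙ hf.aestronglyMeasurable
  simp only [eLpNorm', enorm_eq_self, ENNReal.rpow_one, div_one] at h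
  calc ∫⁻ ω, f ω ^ α ∂ℙ = ((∫⁻ ω, f ω ^ α ∂ℙ) ^ (1 / α)) ^ α := by
        rw [← ENNReal.rpow_mul, one_div, inv_mul_cancel₀ hα.ne', ENNReal.rpow_one]
    _ ≤ (∫⁻ ω, f ω ∂ℙ) ^ α := ENNReal.rpow_le_rpow h hα.le

section Potential

variable {E : Type*} [PseudoEMetricSpace E] [MeasurableSpace E]

noncomputable def rieszEnergy (s : ℝ) (ν : Measure E) : ℝ≥0∞ :=
  ∫⁻ x, ∫⁻ y, edist x y ^ (-s) ∂ν ∂ν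

theorem rieszEnergy_map [OpensMeasurableSpace E] [SecondCountableTopology E] {T : Type*}
    [MeasurableSpace T] {μ : Measure T} [SFinite μ] {f : T → E} (hf : Measurable f) (s : ℝ) :
    rieszEnergy s (μ.map f) = ∫⁻ t, ∫⁻ u, edist (f t) (f u) ^ (-s) ∂μ ∂μ := by
  rw [rieszEnergy, lintegral_map (measurable_edist.pow_const _).lintegral_prod_right' hf]
  exact lintegral_congr fun t =>
    lintegral_map ((continuous_const.edist continuous_id).measurable.pow_const _) hf

variable [OpensMeasurableSpace E] (ν : Measure E) {s : ℝ}

theorem measure_closedEBall_mul_rpow_neg_le_lintegral (hs : 0 ≤ s) (x : E) (r : ℝ≥0∞) :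
    ν (closedEBall x r) * r ^ (-s) ≤ ∫⁻ y, edist x y ^ (-s) ∂ν := by
  have hmeas : Measurable fun y => edist x y ^ (-s) :=
    (continuous_const.edist continuous_id).measurable.pow_const _
  calc ν (closedEBall x r) * r ^ (-s) ≤ r ^ (-s) * ν {y | r ^ (-s) ≤ edist x y ^ (-s)} := by
        rw [mul_comm]
        refine mul_le_mul_right (measure_mono fun y hy => ?_) _
        show r ^ (-s) ≤ edist x y ^ (-s)
        rw [ENNReal.rpow_neg, ENNReal.rpow_neg]
        exact ENNReal.inv_le_inv.mpr (ENNReal.rpow_le_rpow (by rw [edist_comm]; exact hy) hs)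
    _ ≤ ∫⁻ y, edist x y ^ (-s) ∂ν := mul_meas_ge_le_lintegral₀ hmeas.aemeasurable _

theorem measure_closedEBall_le_mul_rpow (hs : 0 ≤ s) {x : E} {c : ℝ≥0∞}
    (hc : ∫⁻ y, edist x y ^ (-s) ∂ν < c) (hc_top : c ≠ ∞) (r : ℝ≥0∞) :
    ν (closedEBall x r) ≤ c * r ^ s := by
  rw [← ENNReal.div_le_iff_le_mul (Or.inr hc_top) (Or.inr (pos_of_gt hc).ne'), div_eq_mul_inv,
    ← ENNReal.rpow_neg]
  exact (measure_closedEBall_mul_rpow_neg_le_lintegral ν hs x r).trans hc.le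

end Potential

section MassDistribution

variable {E : Type*} [EMetricSpace E] [MeasurableSpace E] [BorelSpace E] (ν : Measure E) {s : ℝ}

theorem smul_restrict_le_hausdorffMeasure {A : Set E} (hA : MeasurableSet A) (c : ℝ≥0∞)
    (h : ∀ x ∈ A, ∀ r, ν (closedEBall x r) ≤ c * r ^ s) : c⁻¹ • ν.restrict A ≤ μH[s] := by
  refine Measure.le_hausdorffMeasure _ _ 1 one_pos fun U _ => ?_
  rw [Measure.smul_apply, Measure.restrict_apply' hA, smul_eq_mul]
  rcases (U ∩ A).eq_empty_or_nonempty with hUA | ⟨x, hxU, hxA⟩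
  · simp [hUA]
  have hU : U ∩ A ⊆ closedEBall x (ediam U) := fun y hy => edist_le_ediam_of_mem hy.1 hxU
  calc c⁻¹ * ν (U ∩ A) ≤ c⁻¹ * (c * ediam U ^ s) :=
        mul_le_mul_right ((measure_mono hU).trans (h x hxA _)) _
    _ ≤ ediam U ^ s := by
        rw [← mul_assoc]
        exact mul_le_of_le_one_left' (ENNReal.inv_mul_le_one c)

theorem hausdorffMeasure_pos_of_rieszEnergy_lt_top [SecondCountableTopology E] [SFinite ν]
    (hs : 0 ≤ s) (henergy : rieszEnergy s ν < ∞) {S : Set E} (hS : ν S ≠ 0) :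
    0 < μH[s] S := by
  set g : E → ℝ≥0∞ := fun x => ∫⁻ y, edist x y ^ (-s) ∂ν
  have hg : Measurable g := (measurable_edist.pow_const _).lintegral_prod_right'
  obtain ⟨M, hM⟩ : ∃ M : ℕ, ν (S ∩ {x | g x < M}) ≠ 0 := by
    by_contra! h
    apply hS
    have hcover : S ∩ {x | g x < ∞} = ⋃ M : ℕ, S ∩ {x | g x < M} := by
      ext x
      simp only [mem_inter_iff, mem_iUnion, mem_ofPred_eq, exists_and_left, lt_top_iff_ne_top]
      exact and_congr_right fun _ => ⟨ENNReal.exists_nat_gt, fun ⟨_, hn⟩ => ne_top_of_lt hn⟩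
    rw [← measure_inter_conull (ae_lt_top hg henergy.ne), hcover]
    exact measure_iUnion_null h
  have hA : MeasurableSet {x | g x < M} := hg measurableSet_Iio
  have hle := smul_restrict_le_hausdorffMeasure ν hA M fun x hx r =>
    measure_closedEBall_le_mul_rpow ν hs hx (ENNReal.natCast_ne_top M) r
  calc 0 < ((M : ℝ≥0∞)⁻¹ • ν.restrict {x | g x < M}) S := by
        rw [Measure.smul_apply, Measure.restrict_apply' hA, smul_eq_mul]
        exact ENNReal.mul_pos (ENNReal.inv_ne_zero.mpr (ENNReal.natCast_ne_top M)) hM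
    _ ≤ μH[s] S := hle S

end MassDistribution

section RandomEnergy

variable {Ω T E : Type*} [MeasurableSpace Ω] [MeasurableSpace T] [PseudoEMetricSpace E]
  [MeasurableSpace E] [OpensMeasurableSpace E] [SecondCountableTopology E] {X : T → Ω → E}
  {μ : Measure T} [SFinite μ]

theorem measurable_edist_rpow_neg_of_uncurry (hX : Measurable fun p : T × Ω => X p.1 p.2)
    (s : ℝ) :
    Measurable fun q : (Ω × T) × T => edist (X q.1.2 q.1.1) (X q.2 q.1.1) ^ (-s) :=
  ((hX.comp (measurable_fst.snd.prodMk measurable_fst.fst)).edist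
    (hX.comp (measurable_snd.prodMk measurable_fst.fst))).pow_const _

theorem measurable_lintegral_lintegral_edist_rpow_neg
    (hX : Measurable fun p : T × Ω => X p.1 p.2) (s : ℝ) :
    Measurable fun ω => ∫⁻ t, ∫⁻ u, edist (X t ω) (X u ω) ^ (-s) ∂μ ∂μ :=
  (measurable_edist_rpow_neg_of_uncurry hX s).lintegral_prod_right'.lintegral_prod_right'

theorem lintegral_lintegral_lintegral_edist_rpow_neg_le
    (hX : Measurable fun p : T × Ω => X p.1 p.2) (s : ℝ) {ℙ : Measure Ω} [SFinite ℙ]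
    {k : T → T → ℝ≥0∞}
    (h : ∀ᵐ t ∂μ, ∀ᵐ u ∂μ, ∫⁻ ω, edist (X t ω) (X u ω) ^ (-s) ∂ℙ ≤ k t u) :
    ∫⁻ ω, ∫⁻ t, ∫⁻ u, edist (X t ω) (X u ω) ^ (-s) ∂μ ∂μ ∂ℙ ≤ ∫⁻ t, ∫⁻ u, k t u ∂μ ∂μ := by
  have hG := measurable_edist_rpow_neg_of_uncurry hX s
  calc ∫⁻ ω, ∫⁻ t, ∫⁻ u, edist (X t ω) (X u ω) ^ (-s) ∂μ ∂μ ∂ℙ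
      = ∫⁻ t, ∫⁻ ω, ∫⁻ u, edist (X t ω) (X u ω) ^ (-s) ∂μ ∂ℙ ∂μ :=
        lintegral_lintegral_swap hG.lintegral_prod_right'.aemeasurable
    _ = ∫⁻ t, ∫⁻ u, ∫⁻ ω, edist (X t ω) (X u ω) ^ (-s) ∂ℙ ∂μ ∂μ :=
        lintegral_congr fun t => lintegral_lintegral_swap
          (hG.comp ((measurable_fst.prodMk measurable_const).prodMk measurable_snd)).aemeasurable
    _ ≤ ∫⁻ t, ∫⁻ u, k t u ∂μ ∂μ := lintegral_mono_ae (h.mono fun _ ht => lintegral_mono_ae ht)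

end RandomEnergy

theorem ENNReal.ofReal_mul_inv_sub_rpow {C t u α : ℝ} (hut : u < t) (hα : 0 ≤ α) :
    ENNReal.ofReal (C * (t - u)⁻¹) ^ α = ENNReal.ofReal C ^ α * edist t u ^ (-α) := by
  have htu : 0 < t - u := sub_pos.mpr hut
  rw [ENNReal.ofReal_mul' (inv_nonneg.mpr htu.le), ENNReal.mul_rpow_of_nonneg _ _ hα,
    ENNReal.ofReal_inv_of_pos htu, ENNReal.inv_rpow, ← ENNReal.rpow_neg, edist_dist,
    Real.dist_eq, abs_of_pos htu]

theorem lintegral_edist_rpow_neg_mul_le {Ω E : Type*} [MeasurableSpace Ω] {ℙ : Measure Ω}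
    [IsProbabilityMeasure ℙ] [PseudoEMetricSpace E] [MeasurableSpace E] [OpensMeasurableSpace E]
    [SecondCountableTopology E] {X : ℝ → Ω → E} (hX : ∀ t, Measurable (X t)) {C l α : ℝ}
    (hC : 0 < C)
    (hmom : ∀ s t : ℝ, 0 ≤ s → s < t → t ≤ 1 →
      (∫⁻ ω, (edist (X t ω) (X s ω)) ^ (-l) ∂ℙ) ≤ ENNReal.ofReal (C * (t - s)⁻¹))
    (hα : 0 < α) (hα1 : α ≤ 1) {t u : ℝ} (ht : t ∈ Icc 0 1) (hu : u ∈ Icc 0 1) :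
    ∫⁻ ω, edist (X t ω) (X u ω) ^ (-(α * l)) ∂ℙ ≤ ENNReal.ofReal C ^ α * edist t u ^ (-α) := by
  have key : ∀ {t u : ℝ}, 0 ≤ u → u < t → t ≤ 1 →
      ∫⁻ ω, edist (X t ω) (X u ω) ^ (-(α * l)) ∂ℙ ≤ ENNReal.ofReal C ^ α * edist t u ^ (-α) := by
    intro t u hu hut ht
    calc ∫⁻ ω, edist (X t ω) (X u ω) ^ (-(α * l)) ∂ℙ
        = ∫⁻ ω, (edist (X t ω) (X u ω) ^ (-l)) ^ α ∂ℙ := by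
          simp only [← ENNReal.rpow_mul, neg_mul, mul_comm l α]
      _ ≤ (∫⁻ ω, edist (X t ω) (X u ω) ^ (-l) ∂ℙ) ^ α :=
          lintegral_rpow_le_rpow_lintegral (((hX t).edist (hX u)).pow_const _).aemeasurable hα hα1
      _ ≤ ENNReal.ofReal (C * (t - u)⁻¹) ^ α := ENNReal.rpow_le_rpow (hmom u t hu hut ht) hα.le
      _ = ENNReal.ofReal C ^ α * edist t u ^ (-α) := ENNReal.ofReal_mul_inv_sub_rpow hut hα.le
  rcases lt_trichotomy u t with hut | rfl | htu
  · exact key hu.1 hut ht.2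
  · rw [edist_self, ENNReal.zero_rpow_of_neg (neg_neg_of_pos hα),
      ENNReal.mul_top (ENNReal.rpow_pos (ENNReal.ofReal_pos.mpr hC) ENNReal.ofReal_ne_top).ne']
    exact le_top
  · simpa only [edist_comm] using key ht.1 htu hu.2

theorem image_hausdorff_pos_of_neg_moment_general
    {Ω : Type*} [MeasurableSpace Ω] (ℙ : Measure Ω) [IsProbabilityMeasure ℙ]
    (d : ℕ) (X : ℝ → Ω → EuclideanSpace ℝ (Fin d))
    (hX : Measurable (fun p : ℝ × Ω => X p.1 p.2))
    (C l : ℝ) (hC : 0 < C) (hl : 0 < l)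
    (hmom : ∀ s t : ℝ, 0 ≤ s → s < t → t ≤ 1 →
      (∫⁻ ω, (edist (X t ω) (X s ω)) ^ (-l) ∂ℙ) ≤ ENNReal.ofReal (C * (t - s)⁻¹))
    (F : Set ℝ) (hF01 : F ⊆ Set.Icc 0 1)
    (μ : Measure ℝ) [IsProbabilityMeasure μ] (hμ : μ Fᶜ = 0)
    (α : ℝ) (hα : 0 < α) (hα1 : α ≤ 1)
    (henergy : (∫⁻ t in F, ∫⁻ s in F, (edist t s) ^ (-α) ∂μ ∂μ) < ∞) :
    ∀ᵐ ω ∂ℙ,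
      (∫⁻ t in F, ∫⁻ s in F, (edist (X t ω) (X s ω)) ^ (-(α * l)) ∂μ ∂μ) < ∞ ∧
      0 < μH[α * l] ((fun t => X t ω) '' F) := by
  have hIcc : ∀ᵐ t ∂μ.restrict F, t ∈ Icc (0 : ℝ) 1 :=
    ae_restrict_of_ae_restrict_of_subset hF01 (ae_restrict_mem measurableSet_Icc)
  have hmomα : ∀ᵐ t ∂μ.restrict F, ∀ᵐ u ∂μ.restrict F,
      ∫⁻ ω, edist (X t ω) (X u ω) ^ (-(α * l)) ∂ℙ ≤ ENNReal.ofReal C ^ α * edist t u ^ (-α) := by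
    filter_upwards [hIcc] with t ht
    filter_upwards [hIcc] with u hu
    exact lintegral_edist_rpow_neg_mul_le (fun t => hX.comp (measurable_const.prodMk measurable_id))
      hC hmom hα hα1 ht hu
  have hK : ENNReal.ofReal C ^ α ≠ ∞ := ENNReal.rpow_ne_top_of_nonneg hα.le ENNReal.ofReal_ne_top
  have hmean : ∫⁻ ω, ∫⁻ t in F, ∫⁻ u in F, edist (X t ω) (X u ω) ^ (-(α * l)) ∂μ ∂μ ∂ℙ < ∞ := by
    refine (lintegral_lintegral_lintegral_edist_rpow_neg_le hX _ hmomα).trans_lt ?_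
    simp only [lintegral_const_mul' _ _ hK]
    exact ENNReal.mul_lt_top hK.lt_top henergy
  filter_upwards [ae_lt_top (measurable_lintegral_lintegral_edist_rpow_neg hX _) hmean.ne] with ω hω
  have hXω : Measurable (X · ω) := hX.comp (measurable_id.prodMk measurable_const)
  have hμF : μ.restrict F F ≠ 0 := by
    rw [Measure.restrict_apply_self]
    refine (one_pos.trans_le ?_).ne'
    simpa [hμ] using measure_univ_le_add_compl F (μ := μ)
  refine ⟨hω, hausdorffMeasure_pos_of_rieszEnergy_lt_top ((μ.restrict F).map (X · ω))
    (by positivity) (by rwa [rieszEnergy_map hXω]) ?_⟩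
  exact (pos_iff_ne_zero.mpr hμF |>.trans_le (Measure.le_map_apply_image hXω.aemeasurable F)).ne'

/-- if `E|X_t - X_s|^{-λ} ≤ C|t-s|^{-1}` and `F ⊆ [0,1]` carries a
probability measure `μ` of finite `α`-energy (`α ∈ (0,1]`), then almost surely the image
measure under `t ↦ X_t` has finite `αλ`-energy and `ℋ^{αλ}(X(F)) > 0`. -/
theorem image_hausdorff_pos_of_neg_moment
    {Ω : Type*} [MeasurableSpace Ω] (ℙ : Measure Ω) [IsProbabilityMeasure ℙ]
    (d : ℕ) (X : ℝ → Ω → EuclideanSpace ℝ (Fin d))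
    (hX : Measurable (fun p : ℝ × Ω => X p.1 p.2))
    (C l : ℝ) (hC : 0 < C) (hl : 0 < l)
    (hmom : ∀ s t : ℝ, 0 ≤ s → s < t → t ≤ 1 →
      (∫⁻ ω, (edist (X t ω) (X s ω)) ^ (-l) ∂ℙ) ≤ ENNReal.ofReal (C * (t - s)⁻¹))
    (F : Set ℝ) (hF : MeasurableSet F) (hF01 : F ⊆ Set.Icc 0 1)
    (μ : Measure ℝ) [IsProbabilityMeasure μ] (hμ : μ Fᶜ = 0)
    (α : ℝ) (hα : 0 < α) (hα1 : α ≤ 1)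
    (henergy : (∫⁻ t in F, ∫⁻ s in F, (edist t s) ^ (-α) ∂μ ∂μ) < ∞) :
    ∀ᵐ ω ∂ℙ,
      (∫⁻ t in F, ∫⁻ s in F, (edist (X t ω) (X s ω)) ^ (-(α * l)) ∂μ ∂μ) < ∞ ∧
      0 < μH[α * l] ((fun t => X t ω) '' F) :=
  image_hausdorff_pos_of_neg_moment_general ℙ d X hX C l hC hl hmom F hF01 μ hμ α hα hα1 henergy
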